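/- arXiv:2403.07668 — 3 statements merged into one kernel-verified Lean document; each statement's English description precedes it below -/
import Mathlib

section
/- Let a, b, c, α, β, γ, σ be real numbers with a ≠ 0, and suppose the dual numbers A = a + αε, B = b + βε, C = c + γε satisfy the shadow Markoff equation A² + B² + C² = (3 − σε)·A·B·C. Set a' = (b² + c²)/a and α' = (−a'α + 2bβ + 2cγ)/a, and A' = a' + α'ε. Then (A', B, C) also satisfies the shadow Markoff equation A'² + B² + C² = (3 − σε)·A'·B·C with the same constant σ. -/
/-! Vieta: the equation is quadratic in `A` with root sum `(3 - σε)BC` and root product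
`B² + C²`, and the mutation replaces `A` by the other root `(B² + C²)/A`, which makes sense
because `A` is a unit when `a ≠ 0`. -/

open DualNumber TrivSqZeroExt

theorem markoff_of_add_eq_of_mul_eq {R : Type*} [CommRing R] {k A A' B C : R}
    (hsum : A + A' = k * B * C) (hprod : A * A' = B ^ 2 + C ^ 2) :
    A' ^ 2 + B ^ 2 + C ^ 2 = k * A' * B * C := by
  linear_combination A' * hsum - hprod

theorem add_eq_of_markoff_of_mul_eq {R : Type*} [CommRing R] {k A A' B C : R}
    (hreg : IsLeftRegular A)
    (hA : A ^ 2 + B ^ 2 + C ^ 2 = k * A * B * C) (hprod : A * A' = B ^ 2 + C ^ 2) :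
    A + A' = k * B * C :=
  hreg <| by linear_combination hA + hprod

theorem inl_add_smul_eps_mul {R : Type*} [CommSemiring R] (a α b β : R) :
    (inl a + α • ε : R[ε]) * (inl b + β • ε) = inl (a * b) + (a * β + α * b) • ε := by
  ext <;> simp

theorem mutation_mul {K : Type*} [Field K] {a b c α β γ a' α' : K} (ha : a ≠ 0)
    (ha' : a' = (b ^ 2 + c ^ 2) / a) (hα' : α' = (-a' * α + 2 * b * β + 2 * c * γ) / a) :
    (inl a + α • ε : K[ε]) * (inl a' + α' • ε) =
      (inl b + β • ε) ^ 2 + (inl c + γ • ε) ^ 2 := by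
  rw [pow_two, pow_two, inl_add_smul_eps_mul, inl_add_smul_eps_mul, inl_add_smul_eps_mul]
  have hfst : a * a' = b * b + c * c := by rw [ha']; field_simp
  have hsnd : a * α' + α * a' = b * β + β * b + (c * γ + γ * c) := by
    rw [hα', ha']; field_simp; ring
  rw [hfst, hsnd, inl_add, add_smul]
  abel

theorem isUnit_inl_add_smul_eps {K : Type*} [Field K] {a : K} (ha : a ≠ 0) (α : K) :
    IsUnit (inl a + α • ε : K[ε]) := by
  simpa [isUnit_iff_isUnit_fst] using ha

/-- Mutation preserves the shadow Markoff equation: if `(A, B, C)` satisfies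
`A² + B² + C² = (3 − σε)ABC` and `a ≠ 0`, then the mutated triple `(A', B, C)`
with `A' = a' + α'ε`, `a' = (b² + c²)/a`, `α' = (−a'α + 2bβ + 2cγ)/a`,
satisfies the same equation with the same constant `σ`. -/
theorem mutation_preserves_shadow_markoff (a b c α β γ σ : ℝ) (ha : a ≠ 0)
    (A B C : DualNumber ℝ)
    (hA : A = inl a + α • DualNumber.eps)
    (hB : B = inl b + β • DualNumber.eps)
    (hC : C = inl c + γ • DualNumber.eps)
    (hEq : A ^ 2 + B ^ 2 + C ^ 2 = (3 - σ • DualNumber.eps) * A * B * C)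
    (a' α' : ℝ) (A' : DualNumber ℝ)
    (ha' : a' = (b ^ 2 + c ^ 2) / a)
    (hα' : α' = (-a' * α + 2 * b * β + 2 * c * γ) / a)
    (hA' : A' = inl a' + α' • DualNumber.eps) :
    A' ^ 2 + B ^ 2 + C ^ 2 = (3 - σ • DualNumber.eps) * A' * B * C := by
  subst hA hB hC hA'
  have hprod := mutation_mul ha ha' hα'
  have hsum := add_eq_of_markoff_of_mul_eq (isUnit_inl_add_smul_eps ha α).isRegular.left hEq hprod
  exact markoff_of_add_eq_of_mul_eq hsum hprod
end

section
/- For every word w ∈ {L,R}*, the map ℚ³ → ℚ³ sending (α, β, γ) to the triple of shadow components (second entries) of T_w(α, β, γ) is a ℚ-linear map. -/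
/-!
The real parts of a mutated triple depend only on the real parts, and the new shadow is a linear
combination of the old shadows whose coefficients are rational functions of the real parts. Hence
along any word the real parts stay constant in `(α, β, γ)` and the shadows evolve by a composition
of linear maps, starting from the identity at the root.
-/

/-- A direction in the Markoff tree: left or right. -/
inductive Dir : Type
  | L : Dir
  | R : Dir

/-- A triple of dual-number-like pairs `(real part, shadow part)` of rationals. -/
abbrev Triple : Type := (ℚ × ℚ) × (ℚ × ℚ) × (ℚ × ℚ)

/-- The left mutation `μ_L((a,α),(b,β),(c,γ)) = ((a,α),(c,γ),(b',β'))` with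
`b' = (a²+c²)/b` and `β' = (−b'β + 2aα + 2cγ)/b`. -/
def muL : Triple → Triple
  | ((a, α), (b, β), (c, γ)) =>
    ((a, α), (c, γ),
      ((a ^ 2 + c ^ 2) / b,
        (-((a ^ 2 + c ^ 2) / b) * β + 2 * a * α + 2 * c * γ) / b))

/-- The right mutation `μ_R((a,α),(b,β),(c,γ)) = ((c,γ),(b,β),(a',α'))` with
`a' = (b²+c²)/a` and `α' = (−a'α + 2bβ + 2cγ)/a`. -/
def muR : Triple → Triple
  | ((a, α), (b, β), (c, γ)) =>
    ((c, γ), (b, β),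
      ((b ^ 2 + c ^ 2) / a,
        (-((b ^ 2 + c ^ 2) / a) * α + 2 * b * β + 2 * c * γ) / a))

/-- Apply the composition of mutations given by the word `w` to the root
`((1,α),(1,β),(1,γ))`. -/
def treeTriple (w : List Dir) (α β γ : ℚ) : Triple :=
  w.foldl (fun t d => match d with | Dir.L => muL t | Dir.R => muR t)
    ((1, α), (1, β), (1, γ))

def mkTriple (x s : ℚ × ℚ × ℚ) : Triple :=
  ((x.1, s.1), (x.2.1, s.2.1), (x.2.2, s.2.2))

def realParts (t : Triple) : ℚ × ℚ × ℚ :=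
  (t.1.1, t.2.1.1, t.2.2.1)

def shadowParts (t : Triple) : ℚ × ℚ × ℚ :=
  (t.1.2, t.2.1.2, t.2.2.2)

section

variable {V : Type*} [AddCommGroup V] [Module ℚ V]

def HasLinearShadows (f : V → Triple) : Prop :=
  ∃ (x : ℚ × ℚ × ℚ) (S : V →ₗ[ℚ] ℚ × ℚ × ℚ), ∀ v, f v = mkTriple x (S v)

def IsShadowLinear (μ : Triple → Triple) : Prop :=
  ∀ x, HasLinearShadows fun s => μ (mkTriple x s)

theorem HasLinearShadows.comp {f : V → Triple} {μ : Triple → Triple}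
    (hf : HasLinearShadows f) (hμ : IsShadowLinear μ) :
    HasLinearShadows (μ ∘ f) := by
  obtain ⟨x, S, hS⟩ := hf
  obtain ⟨x', M, hM⟩ := hμ x
  exact ⟨x', M ∘ₗ S, fun v => by simp only [Function.comp_apply, hS, hM, LinearMap.comp_apply]⟩

theorem isShadowLinear_muL : IsShadowLinear muL := fun x =>
  ⟨realParts (muL (mkTriple x 0)),
    { toFun := fun s => shadowParts (muL (mkTriple x s))
      map_add' := fun s t => Prod.ext rfl <| Prod.ext rfl <| by
        simp only [muL, mkTriple, shadowParts, Prod.fst_add, Prod.snd_add]; ring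
      map_smul' := fun r s => Prod.ext rfl <| Prod.ext rfl <| by
        simp only [muL, mkTriple, shadowParts, Prod.smul_fst, Prod.smul_snd, smul_eq_mul,
          RingHom.id_apply]; ring },
    fun _ => rfl⟩

theorem isShadowLinear_muR : IsShadowLinear muR := fun x =>
  ⟨realParts (muR (mkTriple x 0)),
    { toFun := fun s => shadowParts (muR (mkTriple x s))
      map_add' := fun s t => Prod.ext rfl <| Prod.ext rfl <| by
        simp only [muR, mkTriple, shadowParts, Prod.fst_add, Prod.snd_add]; ring
      map_smul' := fun r s => Prod.ext rfl <| Prod.ext rfl <| by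
        simp only [muR, mkTriple, shadowParts, Prod.smul_fst, Prod.smul_snd, smul_eq_mul,
          RingHom.id_apply]; ring },
    fun _ => rfl⟩

theorem HasLinearShadows.foldl {α : Type*} {step : Triple → α → Triple}
    (hstep : ∀ a, IsShadowLinear (step · a)) (w : List α) {f : V → Triple}
    (hf : HasLinearShadows f) :
    HasLinearShadows fun v => w.foldl step (f v) := by
  induction w generalizing f with
  | nil => exact hf
  | cons a w ih => exact ih (hf.comp (hstep a))

end

theorem hasLinearShadows_treeTriple (w : List Dir) :
    HasLinearShadows fun v : ℚ × ℚ × ℚ => treeTriple w v.1 v.2.1 v.2.2 :=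
  HasLinearShadows.foldl (by rintro (_ | _); exacts [isShadowLinear_muL, isShadowLinear_muR]) w
    ⟨(1, 1, 1), LinearMap.id, fun _ => rfl⟩

/-- For every word `w`, the map sending `(α, β, γ)` to the triple of shadow
components of `T_w(α, β, γ)` is a `ℚ`-linear map. -/
theorem shadow_tree_isLinearMap (w : List Dir) :
    IsLinearMap ℚ (fun v : ℚ × ℚ × ℚ =>
      ((treeTriple w v.1 v.2.1 v.2.2).1.2,
        (treeTriple w v.1 v.2.1 v.2.2).2.1.2,
        (treeTriple w v.1 v.2.1 v.2.2).2.2.2)) := by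
  obtain ⟨x, S, hS⟩ := hasLinearShadows_treeTriple w
  simp only [hS]
  exact S.isLinear
end

section
/- Define Pell numbers by P₀ = 0, P₁ = 1, P_{n+2} = 2P_{n+1} + P_n. Define rational sequences (x_n), (y_n) by x₀ = 1, y₀ = 2, x₁ = 5, y₁ = 12, and for n ≥ 1: x_{n+1} = (4 + x_n²)/x_{n−1} and y_{n+1} = (−x_{n+1}·y_{n−1} + 8 + 2·x_n·y_n)/x_{n−1}. Then for all n, x_n = P_{2n+1} and y_n = P_{2n+2}; that is, along the branch of odd Pell Markoff numbers, the shadows arising from the initial shadow triple (1, 0, 2) are the even Pell numbers. -/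
/-!
Writing `a = P_{2n+1}` and `b = P_{2n+2}`, every later Pell number is an integer linear
form in `a` and `b`, and both recursions reduce to the Cassini identity
`P_{2n+2}² - P_{2n+1} P_{2n+3} = -1`, i.e. `a² + 2ab - b² = 1`. Since odd Pell numbers are
positive, the divisions are honest, and two-step induction matches `x` with the odd Pell
numbers, after which the `y`-recursion matches `y` with the even ones.
-/

/-- The Pell numbers: `P₀ = 0`, `P₁ = 1`, `P_{n+2} = 2P_{n+1} + P_n`. -/
def pell : ℕ → ℚ
  | 0 => 0
  | 1 => 1
  | n + 2 => 2 * pell (n + 1) + pell n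

lemma pell_add_two (n : ℕ) : pell (n + 2) = 2 * pell (n + 1) + pell n := rfl

lemma pell_pos : ∀ n, 0 < pell (n + 1)
  | 0 => by norm_num [pell]
  | 1 => by norm_num [pell]
  | n + 2 => by
    rw [pell_add_two]
    linarith [pell_pos n, pell_pos (n + 1)]

lemma pell_sq_sub_mul (n : ℕ) : pell (n + 1) ^ 2 - pell n * pell (n + 2) = (-1) ^ n := by
  induction n with
  | zero => norm_num [pell]
  | succ n ih =>
    rw [pell_add_two (n + 1), pow_succ]
    linear_combination (-1 : ℚ) * ih + pell (n + 2) * pell_add_two n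

lemma pell_odd_cassini (n : ℕ) :
    pell (2 * n + 1) ^ 2 + 2 * pell (2 * n + 1) * pell (2 * n + 2) - pell (2 * n + 2) ^ 2 = 1 := by
  have h := pell_sq_sub_mul (2 * n + 1)
  rw [(odd_two_mul_add_one n).neg_one_pow, pell_add_two (2 * n + 1)] at h
  linear_combination -h

lemma pell_odd_markoff (n : ℕ) :
    pell (2 * n + 5) * pell (2 * n + 1) = 4 + pell (2 * n + 3) ^ 2 := by
  have h3 : pell (2 * n + 3) = 2 * pell (2 * n + 2) + pell (2 * n + 1) := pell_add_two _
  have h4 : pell (2 * n + 4) = 2 * pell (2 * n + 3) + pell (2 * n + 2) := pell_add_two _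
  have h5 : pell (2 * n + 5) = 2 * pell (2 * n + 4) + pell (2 * n + 3) := pell_add_two _
  rw [h5, h4, h3]
  linear_combination 4 * pell_odd_cassini n

lemma pell_odd_shadow (n : ℕ) :
    pell (2 * n + 6) * pell (2 * n + 1) =
      -pell (2 * n + 5) * pell (2 * n + 2) + 8 + 2 * pell (2 * n + 3) * pell (2 * n + 4) := by
  have h3 : pell (2 * n + 3) = 2 * pell (2 * n + 2) + pell (2 * n + 1) := pell_add_two _
  have h4 : pell (2 * n + 4) = 2 * pell (2 * n + 3) + pell (2 * n + 2) := pell_add_two _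
  have h5 : pell (2 * n + 5) = 2 * pell (2 * n + 4) + pell (2 * n + 3) := pell_add_two _
  have h6 : pell (2 * n + 6) = 2 * pell (2 * n + 5) + pell (2 * n + 4) := pell_add_two _
  rw [h6, h5, h4, h3]
  linear_combination 8 * pell_odd_cassini n

/-- Along the odd-Pell branch of the shadow Markoff tree with initial shadow
triple `(1, 0, 2)`, the real parts are the odd Pell numbers and the shadows
are the even Pell numbers. -/
theorem pell_branch_shadow (x y : ℕ → ℚ)
    (hx0 : x 0 = 1) (hy0 : y 0 = 2) (hx1 : x 1 = 5) (hy1 : y 1 = 12)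
    (hx : ∀ n, x (n + 2) = (4 + x (n + 1) ^ 2) / x n)
    (hy : ∀ n, y (n + 2) =
      (-(x (n + 2)) * y n + 8 + 2 * x (n + 1) * y (n + 1)) / x n) :
    ∀ n, x n = pell (2 * n + 1) ∧ y n = pell (2 * n + 2) := by
  have hx_pell : ∀ n, x n = pell (2 * n + 1) := by
    intro n
    induction n using Nat.twoStepInduction with
    | zero => norm_num [hx0, pell]
    | one => norm_num [hx1, pell]
    | more n ih0 ih1 =>
      rw [hx, ih0, ih1, div_eq_iff (pell_pos (2 * n)).ne']
      exact (pell_odd_markoff n).symm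
  refine fun n => ⟨hx_pell n, ?_⟩
  induction n using Nat.twoStepInduction with
  | zero => norm_num [hy0, pell]
  | one => norm_num [hy1, pell]
  | more n ih0 ih1 =>
    rw [hy, hx_pell, hx_pell, hx_pell, ih0, ih1, div_eq_iff (pell_pos (2 * n)).ne']
    exact (pell_odd_shadow n).symm
end
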